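/- arXiv:1007.2927 — 3 statements merged into one kernel-verified Lean document; each statement's English description precedes it below -/
import Mathlib

section
/- Let A be a C*-algebra, X a locally compact Hausdorff space, a a positive element of C₀(X,A), and b a positive element of A. Then the set {x ∈ X : there exists ε > 0 such that b is Cuntz subequivalent to (a(x) − ε)₊ in A} is open in X. (In Cuntz semigroup language this set is {x ∈ X : [b] ≪ [a(x)]}, so the map x ↦ [a(x)] is lower semicontinuous with respect to the compact containment relation ≪.) -/
open scoped ZeroAtInfty

/-- `(a - ε)₊`: the result of applying `t ↦ max (t - ε) 0` to `a` by the (non-unital)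
continuous functional calculus. -/
noncomputable def cutdown {A : Type*} [NonUnitalCStarAlgebra A] (ε : ℝ) (a : A) : A :=
  cfcₙ (fun t : ℝ => max (t - ε) 0) a

/-- Cuntz subequivalence of positive elements in a C*-algebra. -/
def CuntzLE {A : Type*} [NonUnitalCStarAlgebra A] (c d : A) : Prop :=
  ∀ δ > (0 : ℝ), ∃ s : A, ‖c - star s * d * s‖ < δ

/-!
If `‖c - c'‖ < ε - ε'`, then `c - ε₁ ≤ c' - ε'` for some `ε₁ < ε` (in the unitization), and
conjugating by a suitable function `g(c)` turns `c - ε₁` into `(c - ε)₊`; hence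
`(c - ε)₊ ≤ g(c)* (c' - ε')₊ g(c)`, and an inequality `p ≤ q` of positive elements already gives
`p ≼ q`. So `(c - ε)₊ ≼ (c' - ε')₊`, first in `A⁺¹` and then, replacing the unitization witness by
its product with an approximate unit of `A`, in `A` itself. Continuity of `a` makes
`‖a x₀ - a x‖ < ε / 2` near `x₀`, whence `b ≼ (a x₀ - ε)₊ ≼ (a x - ε / 2)₊` there.
-/

open Filter Topology
open scoped CStarAlgebra

section Approximation

variable {R : Type*} [NonUnitalNormedRing R] [StarRing R] [NormedStarGroup R]

lemma norm_sub_star_mul_mul_le (a b c s t : R) :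
    ‖a - star (t * s) * c * (t * s)‖
      ≤ ‖a - star s * b * s‖ + ‖s‖ * ‖b - star t * c * t‖ * ‖s‖ := by
  have hsplit : a - star (t * s) * c * (t * s)
      = (a - star s * b * s) + star s * (b - star t * c * t) * s := by
    rw [star_mul]; noncomm_ring
  rw [hsplit]
  refine (norm_add_le _ _).trans (add_le_add_right ?_ _)
  simpa only [norm_star] using norm_mul₃_le (a := star s) (b := b - star t * c * t) (c := s)

lemma exists_forall_norm_sub_star_mul_mul_lt {a b c s : R} {δ : ℝ}
    (hs : ‖a - star s * b * s‖ < δ) :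
    ∃ η > 0, ∀ t : R, ‖b - star t * c * t‖ < η → ‖a - star (t * s) * c * (t * s)‖ < δ := by
  set gap := δ - ‖a - star s * b * s‖
  have hgap : 0 < gap := sub_pos.2 hs
  refine ⟨gap / (‖s‖ ^ 2 + 1), by positivity, fun t ht => ?_⟩
  have hη : ‖s‖ ^ 2 * (gap / (‖s‖ ^ 2 + 1)) < gap := by
    rw [mul_div_assoc', div_lt_iff₀ (by positivity)]
    nlinarith
  have hts : ‖s‖ * ‖b - star t * c * t‖ * ‖s‖ ≤ ‖s‖ ^ 2 * (gap / (‖s‖ ^ 2 + 1)) := by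
    rw [mul_right_comm, ← sq]
    exact mul_le_mul_of_nonneg_left ht.le (sq_nonneg _)
  linarith [norm_sub_star_mul_mul_le a b c s t]

end Approximation

section Basic

variable {A : Type*} [NonUnitalCStarAlgebra A]

lemma CuntzLE.trans {a b c : A} (hab : CuntzLE a b) (hbc : CuntzLE b c) : CuntzLE a c := by
  intro δ hδ
  obtain ⟨s, hs⟩ := hab δ hδ
  obtain ⟨η, hη, hη_lt⟩ := exists_forall_norm_sub_star_mul_mul_lt (c := c) hs
  obtain ⟨t, ht⟩ := hbc η hη
  exact ⟨t * s, hη_lt t ht⟩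

lemma cuntzLE_star_mul_mul (s d : A) : CuntzLE (star s * d * s) d :=
  fun δ hδ => ⟨s, by simpa using hδ⟩

end Basic

lemma cfc_sub_algebraMap {B : Type*} [CStarAlgebra B] {c : B} (hc : IsSelfAdjoint c) (r : ℝ) :
    c - algebraMap ℝ B r = cfc (fun t : ℝ => t - r) c := by
  rw [cfc_sub .., cfc_id' .., cfc_const ..]

section Unital

variable {B : Type*} [CStarAlgebra B] [PartialOrder B] [StarOrderedRing B]

open CFC in
lemma CuntzLE.of_le {p q : B} (hp : 0 ≤ p) (hpq : p ≤ q) : CuntzLE p q := by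
  intro δ hδ
  obtain ⟨η, hη, hηδ⟩ := exists_between hδ
  have hq : 0 ≤ q := hp.trans hpq
  -- witness `s = (q + η)^(-1/2) p^(1/2)`: then `p - s* q s = η s* s` and `‖s* s‖ ≤ 1`
  set e := cfc (fun t : ℝ => (√(t + η))⁻¹) q
  have he : IsSelfAdjoint e := .cfc
  have hr : IsSelfAdjoint (sqrt p) := (sqrt_nonneg p).isSelfAdjoint
  have he_inv : e * (q + algebraMap ℝ B η) * e = 1 := by
    have hpos : ∀ t ∈ spectrum ℝ q, 0 < t + η := fun t ht => by
      linarith [spectrum_nonneg_of_nonneg hq ht]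
    have hcont : ContinuousOn (fun t : ℝ => (√(t + η))⁻¹) (spectrum ℝ q) :=
      ContinuousOn.inv₀ (by fun_prop) fun t ht => (Real.sqrt_pos.2 (hpos t ht)).ne'
    rw [← cfc_id' ℝ q, ← cfc_add_const .., ← cfc_mul _ _ q hcont,
      ← cfc_mul (fun t : ℝ => (√(t + η))⁻¹ * (t + η)) _ q (hcont.mul (by fun_prop)) hcont,
      ← cfc_one ℝ q]
    refine cfc_congr fun t ht => ?_
    have := hpos t ht
    rw [mul_right_comm, ← mul_inv, Real.mul_self_sqrt this.le, inv_mul_cancel₀ this.ne']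
    rfl
  have hdiff : p - star (e * sqrt p) * q * (e * sqrt p)
      = η • (star (e * sqrt p) * (e * sqrt p)) := by
    have heqe : e * q * e = 1 - η • (e * e) := by
      rw [eq_sub_iff_add_eq, ← he_inv, Algebra.algebraMap_eq_smul_one]
      noncomm_ring
    rw [star_mul, he.star_eq, hr.star_eq]
    calc p - sqrt p * e * q * (e * sqrt p) = sqrt p * (1 - e * q * e) * sqrt p := by
          rw [mul_sub, sub_mul, mul_one, sqrt_mul_sqrt_self p hp]; noncomm_ring
      _ = _ := by rw [heqe]; simp [mul_assoc]
  have hepe : ‖e * p * e‖ ≤ 1 := by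
    have heqe : e * q * e ≤ 1 := by
      rw [← he_inv, mul_add, add_mul]
      exact le_add_of_nonneg_right (he.conjugate_nonneg (algebraMap_nonneg B hη.le))
    exact (CStarAlgebra.norm_le_one_iff_of_nonneg _ (he.conjugate_nonneg hp)).2
      ((he.conjugate_le_conjugate hpq).trans heqe)
  refine ⟨e * sqrt p, ?_⟩
  calc ‖p - star (e * sqrt p) * q * (e * sqrt p)‖ = η * ‖e * p * e‖ := by
        rw [hdiff, norm_smul, Real.norm_of_nonneg hη.le, CStarRing.norm_star_mul_self,
          ← CStarRing.norm_self_mul_star, star_mul, he.star_eq, hr.star_eq, ← mul_assoc,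
          mul_assoc e, sqrt_mul_sqrt_self p hp]
    _ ≤ η := mul_le_of_le_one_right hη.le hepe
    _ < δ := hηδ

lemma cfc_cutdown_cuntzLE {c c' : B} (hc : IsSelfAdjoint c) (hc' : IsSelfAdjoint c')
    {ε ε' : ℝ} (hcc' : ‖c - c'‖ < ε - ε') :
    CuntzLE (cfc (fun t : ℝ => max (t - ε) 0) c) (cfc (fun t : ℝ => max (t - ε') 0) c') := by
  obtain ⟨ε₁, hε'ε₁, hε₁ε⟩ := exists_between (show ε' + ‖c - c'‖ < ε by linarith)
  set g : ℝ → ℝ := fun t => √(max (t - ε) 0 / max (t - ε₁) (ε - ε₁))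
  have hg : Continuous g :=
    ((by fun_prop : Continuous fun t : ℝ => max (t - ε) 0).div (by fun_prop)
      fun t => (lt_max_of_lt_right (sub_pos.2 hε₁ε)).ne').sqrt
  -- `g` is chosen so that `g(c) (c - ε₁) g(c) = (c - ε)₊` exactly
  have hg_conj : ∀ t, g t * (t - ε₁) * g t = max (t - ε) 0 := fun t => by
    rcases le_or_gt t ε with ht | ht
    · simp [g, max_eq_right (sub_nonpos.2 ht)]
    · have hden : max (t - ε₁) (ε - ε₁) = t - ε₁ := max_eq_left (by linarith)
      rw [mul_right_comm, Real.mul_self_sqrt (by positivity), hden,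
        div_mul_cancel₀ _ (by linarith)]
  have hcut : cfc (fun t : ℝ => max (t - ε) 0) c
      = star (cfc g c) * (c - algebraMap ℝ B ε₁) * cfc g c := by
    rw [IsSelfAdjoint.cfc.star_eq, cfc_sub_algebraMap hc, ← cfc_mul .., ← cfc_mul ..]
    simp only [hg_conj]
  have hshift : c - algebraMap ℝ B ε₁ ≤ c' - algebraMap ℝ B ε' := by
    have : c - c' ≤ algebraMap ℝ B (ε₁ - ε') :=
      (hc.sub hc').le_algebraMap_norm_self.trans (algebraMap_mono B (by linarith))
    rw [map_sub, sub_le_sub_iff] at this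
    rwa [sub_le_sub_iff, add_comm c']
  refine (CuntzLE.of_le (cfc_nonneg fun _ _ => le_max_right _ _) ?_).trans
    (cuntzLE_star_mul_mul (cfc g c) _)
  rw [hcut]
  refine star_left_conjugate_le_conjugate (hshift.trans ?_) _
  rw [cfc_sub_algebraMap hc']
  exact cfc_mono fun t _ => le_max_left _ _

end Unital

section NonUnital

variable {A : Type*} [NonUnitalCStarAlgebra A]

lemma Filter.IsIncreasingApproximateUnit.tendsto_star_mul_mul [PartialOrder A]
    [StarOrderedRing A] {l : Filter A} (hl : l.IsIncreasingApproximateUnit) (d : A) :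
    Tendsto (fun e => star e * d * e) l (𝓝 d) := by
  rw [tendsto_iff_norm_sub_tendsto_zero]
  have hlim : Tendsto (fun e => ‖d * e - d‖ + ‖e * d - d‖) l (𝓝 0) := by
    simpa using ((hl.tendsto_mul_left d).sub_const d).norm.add
      ((hl.tendsto_mul_right d).sub_const d).norm
  refine squeeze_zero_norm' ?_ hlim
  filter_upwards [hl.eventually_star_eq, hl.eventually_norm] with e he_star he_norm
  calc ‖‖star e * d * e - d‖‖ = ‖e * (d * e - d) + (e * d - d)‖ := by
        rw [norm_norm, he_star]; noncomm_ring
    _ ≤ ‖e‖ * ‖d * e - d‖ + ‖e * d - d‖ := by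
        grw [norm_add_le, norm_mul_le]
    _ ≤ ‖d * e - d‖ + ‖e * d - d‖ := by
        grw [he_norm, one_mul]

lemma norm_inr_sub_star_mul_mul (b d s : A) :
    ‖(b : A⁺¹) - star (s : A⁺¹) * d * s‖ = ‖b - star s * d * s‖ := by
  simp only [← Unitization.inr_star, ← Unitization.inr_mul, ← Unitization.inr_sub,
    Unitization.norm_inr]

lemma CuntzLE.of_inr [PartialOrder A] [StarOrderedRing A] {b d : A}
    (h : CuntzLE (b : A⁺¹) (d : A⁺¹)) : CuntzLE b d := by
  intro δ hδ
  obtain ⟨s, hs⟩ := h δ hδ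
  obtain ⟨η, hη, hη_lt⟩ := exists_forall_norm_sub_star_mul_mul_lt (c := (d : A⁺¹)) hs
  obtain ⟨e, he⟩ := (((CStarAlgebra.increasingApproximateUnit A).tendsto_star_mul_mul d).eventually
    (Metric.ball_mem_nhds d hη)).exists
  rw [dist_comm, dist_eq_norm] at he
  -- `A` is an ideal of `A⁺¹`, so `e * s` comes from `A`
  set v : A := ((e : A⁺¹) * s).snd
  have hv : ((v : A) : A⁺¹) = (e : A⁺¹) * s := Unitization.ext (by simp) rfl
  refine ⟨v, ?_⟩
  have := hη_lt e (by rwa [norm_inr_sub_star_mul_mul])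
  rwa [← hv, norm_inr_sub_star_mul_mul] at this

lemma inr_cutdown {ε : ℝ} (hε : 0 ≤ ε) (c : A) :
    ((cutdown ε c : A) : A⁺¹) = cfc (fun t : ℝ => max (t - ε) 0) (c : A⁺¹) :=
  Unitization.real_cfcₙ_eq_cfc_inr c _ (by simpa using hε)

lemma cutdown_cuntzLE_cutdown [PartialOrder A] [StarOrderedRing A] {c c' : A}
    (hc : IsSelfAdjoint c) (hc' : IsSelfAdjoint c') {ε ε' : ℝ} (hε' : 0 ≤ ε')
    (hcc' : ‖c - c'‖ < ε - ε') : CuntzLE (cutdown ε c) (cutdown ε' c') := by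
  have hε : 0 ≤ ε := by linarith [norm_nonneg (c - c')]
  refine CuntzLE.of_inr ?_
  rw [inr_cutdown hε, inr_cutdown hε']
  refine cfc_cutdown_cuntzLE (hc.inr ℂ) (hc'.inr ℂ) ?_
  rwa [← Unitization.inr_sub ℂ, Unitization.norm_inr]

end NonUnital

theorem stmt_2_general {X : Type*} [TopologicalSpace X]
    {A : Type*} [NonUnitalCStarAlgebra A] [PartialOrder A] [StarOrderedRing A]
    (a : C₀(X, A)) (ha : ∀ x, 0 ≤ a x) (b : A) :
    IsOpen {x : X | ∃ ε > (0 : ℝ), CuntzLE b (cutdown ε (a x))} := by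
  rw [isOpen_iff_mem_nhds]
  rintro x₀ ⟨ε, hε, hb⟩
  have hnear : ∀ᶠ x in 𝓝 x₀, a x ∈ Metric.ball (a x₀) (ε / 2) :=
    (map_continuous a).continuousAt.eventually (Metric.ball_mem_nhds _ (half_pos hε))
  filter_upwards [hnear] with x hx
  rw [Metric.mem_ball, dist_comm, dist_eq_norm] at hx
  exact ⟨ε / 2, half_pos hε, hb.trans <| cutdown_cuntzLE_cutdown (ha x₀).isSelfAdjoint
    (ha x).isSelfAdjoint (half_pos hε).le (by linarith)⟩

/-- For a positive `a ∈ C₀(X, A)` and positive `b ∈ A`, the set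
`{x : [b] ≪ [a(x)]}`, i.e. those `x` for which `b ≼ (a(x) - ε)₊` for some `ε > 0`,
is open; so `x ↦ [a(x)]` is lower semicontinuous with respect to `≪`. -/
theorem stmt_2 {X : Type*} [TopologicalSpace X] [LocallyCompactSpace X] [T2Space X]
    {A : Type*} [NonUnitalCStarAlgebra A] [PartialOrder A] [StarOrderedRing A]
    (a : C₀(X, A)) (ha : ∀ x, 0 ≤ a x) (b : A) (hb : 0 ≤ b) :
    IsOpen {x : X | ∃ ε > (0 : ℝ), CuntzLE b (cutdown ε (a x))} :=
  stmt_2_general a ha b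
end

section
/- Let X be a compact Hausdorff space and A a separable unital C*-algebra that is finite for projections. Let a be a positive element of C(X,A) such that for every x ∈ X the spectrum of a(x) is contained in {0} ∪ [δ, ∞) for some δ > 0 depending on x, and such that the support projections are pairwise Murray–von Neumann equivalent: χ(a(x)) ~ χ(a(y)) for all x, y ∈ X. Then the map x ↦ χ(a(x)) is a continuous map from X to A, and moreover a is Cuntz equivalent in C(X,A) to the projection x ↦ χ(a(x)). -/
/-- A projection in a C*-algebra: a self-adjoint idempotent. -/
def IsProjectionElem {A : Type*} [Mul A] [Star A] (e : A) : Prop :=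
  star e = e ∧ e * e = e

/-- Murray–von Neumann equivalence of projections. -/
def MvNEquiv {A : Type*} [Mul A] [Star A] (e f : A) : Prop :=
  ∃ v, star v * v = e ∧ v * star v = f

/-- `A` is finite for projections: `e ≤ f`, `e ~ f` implies `e = f` for projections. -/
def FiniteForProjections (A : Type*) [Mul A] [Star A] [PartialOrder A] : Prop :=
  ∀ e f : A, IsProjectionElem e → IsProjectionElem f → e ≤ f → MvNEquiv e f → e = f

/-- `e` is the support projection of `a`: a projection lying in the (non-unital)
C*-subalgebra generated by `a` with `e * a = a`. -/
def IsSupportProjection {A : Type*} [CStarAlgebra A] (e a : A) : Prop :=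
  IsProjectionElem e ∧ e * a = a ∧
    e ∈ closure ((NonUnitalStarAlgebra.adjoin ℂ {a} : NonUnitalStarSubalgebra ℂ A) : Set A)

/-!
Near a point `x₀` where `σ(a x₀) ⊆ {0} ∪ [δ, ∞)`, upper semicontinuity of the spectrum keeps
`σ(a y)` off `[δ/4, δ/2]`, so a ramp `f` turns `a y` into a projection `f (a y) ≤ χ(a y)` that is
norm-close to `f (a x₀) = χ(a x₀)`. Close projections are unitarily equivalent, hence
`f (a y) ~ χ(a x₀) ~ χ(a y)`, and finiteness forces `f (a y) = χ(a y)`, a gap `δ/2` at `y`.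
By compactness the gap is uniform, so `χ(a x) = F (a x)` for a single continuous `F`, which makes
`χ ∘ a` continuous, and `a = √a χ(a) √a`, `χ(a) = g(a) a g(a)` with `g t = (max t δ)^(-1/2)`
give the Cuntz equivalence exactly.
-/

open Set Filter Topology

noncomputable def ramp (α β t : ℝ) : ℝ := max 0 (min 1 ((t - α) / (β - α)))

lemma continuous_ramp (α β : ℝ) : Continuous (ramp α β) := by
  unfold ramp; fun_prop

lemma ramp_of_le {α β t : ℝ} (hαβ : α < β) (ht : t ≤ α) : ramp α β t = 0 := by
  have : (t - α) / (β - α) ≤ 0 := div_nonpos_of_nonpos_of_nonneg (by linarith) (by linarith)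
  simp [ramp, this]

lemma ramp_of_ge {α β t : ℝ} (hαβ : α < β) (ht : β ≤ t) : ramp α β t = 1 := by
  have : 1 ≤ (t - α) / (β - α) := by rw [le_div_iff₀ (by linarith)]; linarith
  simp [ramp, this]

lemma self_eq_sqrt_mul_ramp_mul_sqrt {δ t : ℝ} (hδ : 0 < δ) (ht : t ∈ ({0} ∪ Ici δ : Set ℝ)) :
    t = √t * ramp 0 δ t * √t := by
  rcases ht with rfl | ht
  · simp
  · simp [ramp_of_ge hδ ht, Real.mul_self_sqrt (hδ.le.trans ht)]

lemma ramp_eq_inv_sqrt_mul_mul_inv_sqrt {δ t : ℝ} (hδ : 0 < δ)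
    (ht : t ∈ ({0} ∪ Ici δ : Set ℝ)) :
    ramp 0 δ t = (√(max t δ))⁻¹ * t * (√(max t δ))⁻¹ := by
  rcases ht with rfl | ht
  · simp [ramp_of_le hδ le_rfl]
  · have ht0 : 0 < t := hδ.trans_le ht
    rw [ramp_of_ge hδ ht, max_eq_left (mem_Ici.1 ht)]
    field_simp
    rw [Real.sq_sqrt ht0.le]

lemma isProjectionElem_iff_isStarProjection {A : Type*} [Mul A] [Star A] {e : A} :
    IsProjectionElem e ↔ IsStarProjection e :=
  ⟨fun h => ⟨h.2, h.1⟩, fun h => ⟨h.isSelfAdjoint.star_eq, h.isIdempotentElem.eq⟩⟩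

lemma MvNEquiv.trans {A : Type*} [Semigroup A] [StarMul A] {e f g : A}
    (he : IsIdempotentElem e) (hg : IsIdempotentElem g) (hef : MvNEquiv e f)
    (hfg : MvNEquiv f g) : MvNEquiv e g := by
  obtain ⟨v, hv, hv'⟩ := hef
  obtain ⟨w, hw, hw'⟩ := hfg
  refine ⟨w * v, ?_, ?_⟩
  · calc star (w * v) * (w * v) = star v * (star w * w) * v := by simp only [star_mul, mul_assoc]
      _ = (star v * v) * (star v * v) := by rw [hw, ← hv']; simp only [mul_assoc]
      _ = e := by rw [hv, he.eq]
  · calc w * v * star (w * v) = w * (v * star v) * star w := by simp only [star_mul, mul_assoc]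
      _ = (w * star w) * (w * star w) := by rw [hv', ← hw]; simp only [mul_assoc]
      _ = g := by rw [hw', hg.eq]

lemma MvNEquiv.of_mul_eq_mul {A : Type*} [Monoid A] [StarMul A] {u p q : A}
    (hu : u ∈ unitary A) (hp : IsStarProjection p) (hpq : u * p = q * u) : MvNEquiv p q := by
  refine ⟨u * p, ?_, ?_⟩
  · rw [star_mul, hp.isSelfAdjoint.star_eq, mul_assoc, ← mul_assoc (star u),
      Unitary.star_mul_self_of_mem hu, one_mul, hp.isIdempotentElem.eq]
  · rw [star_mul, hp.isSelfAdjoint.star_eq, mul_assoc, ← mul_assoc p, hp.isIdempotentElem.eq,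
      ← mul_assoc, hpq, mul_assoc, Unitary.mul_star_self_of_mem hu, mul_one]

section Ring

variable {R : Type*} [Ring R]

def idemTransfer (p q : R) : R := q * p + (1 - q) * (1 - p)

variable {p q : R}

lemma idemTransfer_mul (hp : IsIdempotentElem p) (hq : IsIdempotentElem q) :
    idemTransfer p q * p = q * idemTransfer p q := by
  have hq' : ∀ x : R, q * (q * x) = q * x := fun x => by rw [← mul_assoc, hq.eq]
  simp only [idemTransfer, mul_add, add_mul, mul_sub, sub_mul, mul_one, one_mul, mul_assoc, hq',
    hp.eq, hq.eq]
  abel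

lemma idemTransfer_mul_idemTransfer (hp : IsIdempotentElem p) (hq : IsIdempotentElem q) :
    idemTransfer q p * idemTransfer p q = 1 - (p - q) * (p - q) := by
  have hq' : ∀ x : R, q * (q * x) = q * x := fun x => by rw [← mul_assoc, hq.eq]
  simp only [idemTransfer, mul_add, add_mul, mul_sub, sub_mul, mul_one, one_mul, mul_assoc, hq',
    hp.eq, hq.eq]
  abel

lemma commute_sub_mul_sub (hp : IsIdempotentElem p) (hq : IsIdempotentElem q) :
    Commute ((p - q) * (p - q)) p := by
  have hp' : ∀ x : R, p * (p * x) = p * x := fun x => by rw [← mul_assoc, hp.eq]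
  simp only [Commute, SemiconjBy, mul_sub, sub_mul, mul_assoc, hp', hp.eq, hq.eq]
  abel

lemma star_idemTransfer [StarRing R] (hp : IsSelfAdjoint p) (hq : IsSelfAdjoint q) :
    star (idemTransfer p q) = idemTransfer q p := by
  simp only [idemTransfer, star_add, star_mul, star_sub, star_one, hp.star_eq, hq.star_eq]

end Ring

section CStarAlgebra

variable {A : Type*} [CStarAlgebra A]

lemma cfc_eq_cfc_mul_cfc_mul_cfc {a : A} {f g k : ℝ → ℝ} (hf : ContinuousOn f (spectrum ℝ a))
    (hg : ContinuousOn g (spectrum ℝ a)) (hk : EqOn k (fun t => g t * f t * g t) (spectrum ℝ a)) :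
    cfc k a = cfc g a * cfc f a * cfc g a := by
  rw [cfc_congr hk, cfc_mul (fun t => g t * f t) g a (hg.mul hf) hg, cfc_mul g f a hg hf]

lemma spectrum_one_sub_mul_self_subset_Ioi {d : A} (hd : IsSelfAdjoint d) (hd1 : ‖d‖ < 1) :
    spectrum ℝ (1 - d * d) ⊆ Ioi 0 := by
  nontriviality A
  have h : 1 - d * d = cfc (fun t : ℝ => 1 - t * t) d := by
    rw [cfc_sub _ _ d, cfc_const_one ℝ d, cfc_mul _ _ d, cfc_id' ℝ d]
  rw [h, cfc_map_spectrum _ d]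
  rintro _ ⟨t, ht, rfl⟩
  have : |t| < 1 := (spectrum.norm_le_norm_of_mem ht).trans_lt hd1
  rw [mem_Ioi, sub_pos, ← abs_mul_abs_self]
  nlinarith [abs_nonneg t]

lemma mul_cfc_inv_sqrt_mem_unitary {z h : A} (hh : IsSelfAdjoint h)
    (hpos : spectrum ℝ h ⊆ Ioi 0) (hz : star z * z = h) (hz' : z * star z = h) :
    z * cfc (fun t : ℝ => (√t)⁻¹) h ∈ unitary A := by
  set w := cfc (fun t : ℝ => (√t)⁻¹) h
  have hw : IsSelfAdjoint w := cfc_predicate _ _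
  have hhw : h * w = w * h := ((Commute.refl h).cfc_real _).eq.symm
  have hcont : ContinuousOn (fun t : ℝ => (√t)⁻¹) (spectrum ℝ h) :=
    Real.continuous_sqrt.continuousOn.inv₀ fun t ht => (Real.sqrt_pos.2 (hpos ht)).ne'
  have hwhw : w * h * w = 1 := by
    have := cfc_eq_cfc_mul_cfc_mul_cfc (k := fun _ => 1) continuousOn_id hcont fun t ht => by
      have ht : 0 < t := hpos ht
      field_simp
      rw [id, Real.sq_sqrt ht.le]
    rw [cfc_const_one ℝ h, cfc_id ℝ h] at this
    exact this.symm
  have hhww : h * (w * w) = 1 := by rw [← mul_assoc, hhw, hwhw]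
  have hwwh : w * w * h = 1 := by rw [mul_assoc, ← hhw, ← mul_assoc, hwhw]
  rw [Unitary.mem_iff, star_mul, hw.star_eq]
  constructor
  · rw [mul_assoc, ← mul_assoc (star z), hz, ← mul_assoc, hwhw]
  · calc z * w * (w * star z) = z * (w * w) * star z * (h * (w * w)) := by
          rw [hhww, mul_one]; simp only [mul_assoc]
      _ = z * (w * w * h) * star z * (w * w) := by
          conv_lhs => rw [← hz']
          conv_rhs => rw [← hz]
          simp only [mul_assoc]
      _ = 1 := by rw [hwwh, mul_one, hz', hhww]

/-- The polar part of `z = idemTransfer p q` is a unitary conjugating `p` to `q`: `z * p = q * z`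
and `star z * z = z * star z = 1 - (p - q) * (p - q)`, which is invertible as `‖p - q‖ < 1`. -/
lemma mvnEquiv_of_norm_sub_lt_one {p q : A} (hp : IsStarProjection p) (hq : IsStarProjection q)
    (hpq : ‖p - q‖ < 1) : MvNEquiv p q := by
  have hz : star (idemTransfer p q) * idemTransfer p q = 1 - (p - q) * (p - q) := by
    rw [star_idemTransfer hp.isSelfAdjoint hq.isSelfAdjoint,
      idemTransfer_mul_idemTransfer hp.isIdempotentElem hq.isIdempotentElem]
  have hz' : idemTransfer p q * star (idemTransfer p q) = 1 - (p - q) * (p - q) := by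
    rw [star_idemTransfer hp.isSelfAdjoint hq.isSelfAdjoint,
      idemTransfer_mul_idemTransfer hq.isIdempotentElem hp.isIdempotentElem, ← neg_sub p q,
      neg_mul_neg]
  have hh : IsSelfAdjoint (1 - (p - q) * (p - q)) := hz ▸ IsSelfAdjoint.star_mul_self _
  have hu := mul_cfc_inv_sqrt_mem_unitary hh
    (spectrum_one_sub_mul_self_subset_Ioi (hp.isSelfAdjoint.sub hq.isSelfAdjoint) hpq) hz hz'
  refine MvNEquiv.of_mul_eq_mul hu hp ?_
  have hw : Commute (cfc (fun t : ℝ => (√t)⁻¹) (1 - (p - q) * (p - q))) p :=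
    ((Commute.one_left p).sub_left
      (commute_sub_mul_sub hp.isIdempotentElem hq.isIdempotentElem)).cfc_real _
  rw [mul_assoc, hw.eq, ← mul_assoc, idemTransfer_mul hp.isIdempotentElem hq.isIdempotentElem,
    mul_assoc]

open NonUnitalStarAlgebra in
lemma cfc_mem_elemental_of_map_zero {f : ℝ → ℝ} (hf : Continuous f) (hf0 : f 0 = 0) (a : A) :
    cfc f a ∈ elemental ℂ a := by
  rw [← cfcₙ_eq_cfc]
  exact cfcₙ_mem (𝕜 := ℝ) (𝕜' := ℂ) (hs := elemental.isClosed ℂ a) f (elemental.self_mem ℂ a)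

open NonUnitalStarAlgebra in
lemma mul_eq_self_of_mem_elemental {e a b : A} (he : IsSelfAdjoint e) (hea : e * a = a)
    (hae : a * e = a) (hb : b ∈ elemental ℂ a) : e * b = b ∧ b * e = b := by
  let S : NonUnitalStarSubalgebra ℂ A :=
    { carrier := {b | e * b = b ∧ b * e = b}
      add_mem' := fun hx hy => ⟨by rw [mul_add, hx.1, hy.1], by rw [add_mul, hx.2, hy.2]⟩
      zero_mem' := ⟨mul_zero e, zero_mul e⟩
      mul_mem' := fun hx hy => ⟨by rw [← mul_assoc, hx.1], by rw [mul_assoc, hy.2]⟩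
      smul_mem' := fun c x hx => ⟨by rw [mul_smul_comm, hx.1], by rw [smul_mul_assoc, hx.2]⟩
      star_mem' := fun hx => ⟨by rw [← he.star_eq, ← star_mul, hx.2],
        by rw [← he.star_eq, ← star_mul, hx.1]⟩ }
  have hS : IsClosed (S : Set A) :=
    (isClosed_eq (by fun_prop) continuous_id).inter (isClosed_eq (by fun_prop) continuous_id)
  exact elemental.le_of_mem hS ⟨hea, hae⟩ hb

lemma cfc_mul_eq_self_iff {a : A} (ha : IsSelfAdjoint a) {f : ℝ → ℝ}
    (hf : ContinuousOn f (spectrum ℝ a)) :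
    cfc f a * a = a ↔ ∀ t ∈ spectrum ℝ a, f t * t = t := by
  have : cfc f a * a = cfc (fun t => f t * t) a := by
    rw [cfc_mul f (fun t => t) a hf (continuousOn_id' _), cfc_id' ℝ a]
  conv_lhs => rw [this]; rhs; rw [← cfc_id' ℝ a]
  exact cfc_eq_cfc_iff_eqOn ha (hf.mul (continuousOn_id' _)) (continuousOn_id' _)

lemma isStarProjection_cfc {a : A} {f : ℝ → ℝ} (hf : ContinuousOn f (spectrum ℝ a))
    (hff : ∀ t ∈ spectrum ℝ a, f t * f t = f t) : IsStarProjection (cfc f a) :=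
  ⟨by rw [IsIdempotentElem, ← cfc_mul f f a hf hf, cfc_congr hff], cfc_predicate f a⟩

lemma IsSupportProjection.eq_cfc {e a : A} (he : IsSupportProjection e a) (ha : IsSelfAdjoint a)
    {f : ℝ → ℝ} (hf : Continuous f) (hf0 : f 0 = 0)
    (hf1 : ∀ t ∈ spectrum ℝ a, t ≠ 0 → f t = 1) : e = cfc f a := by
  obtain ⟨he, hea, hemem⟩ := he
  have hae : a * e = a := by simpa [he.1, ha.star_eq] using congr(star $hea)
  have hca : cfc f a * a = a := (cfc_mul_eq_self_iff ha hf.continuousOn).2 fun t ht => by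
    rcases eq_or_ne t 0 with rfl | ht0
    · rw [mul_zero]
    · rw [hf1 t ht ht0, one_mul]
  have hac : a * cfc f a = a := ((Commute.refl a).cfc_real f).eq ▸ hca
  calc e = e * cfc f a :=
        ((mul_eq_self_of_mem_elemental (cfc_predicate f a) hca hac hemem).2).symm
    _ = cfc f a := (mul_eq_self_of_mem_elemental he.1 hea hae
        (cfc_mem_elemental_of_map_zero hf hf0 a)).1

lemma IsSupportProjection.cfc_le [PartialOrder A] [StarOrderedRing A] {e a : A}
    (he : IsSupportProjection e a) (ha : IsSelfAdjoint a) {f : ℝ → ℝ} (hf : Continuous f)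
    (hf0 : f 0 = 0) (hproj : IsStarProjection (cfc f a)) : cfc f a ≤ e := by
  obtain ⟨he, hea, -⟩ := he
  have hae : a * e = a := by simpa [he.1, ha.star_eq] using congr(star $hea)
  exact hproj.le_of_mul_eq_left (isProjectionElem_iff_isStarProjection.1 he)
    (mul_eq_self_of_mem_elemental he.1 hea hae (cfc_mem_elemental_of_map_zero hf hf0 a)).2

end CStarAlgebra

lemma CompactSpace.exists_pos_forall_of_eventually {X : Type*} [TopologicalSpace X]
    [CompactSpace X] {Q : ℝ → X → Prop} (hQ : ∀ ⦃δ δ'⦄ y, δ' ≤ δ → Q δ y → Q δ' y)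
    (hloc : ∀ x, ∃ δ > 0, ∀ᶠ y in 𝓝 x, Q δ y) : ∃ δ > 0, ∀ y, Q δ y := by
  suffices ∃ δ > 0, ∀ y ∈ (univ : Set X), Q δ y by simpa using this
  refine IsCompact.induction_on (p := fun s => ∃ δ > 0, ∀ y ∈ s, Q δ y) isCompact_univ
    ⟨1, one_pos, by simp⟩ ?_ ?_ fun x _ => ?_
  · rintro s t hst ⟨δ, hδ, h⟩
    exact ⟨δ, hδ, fun y hy => h y (hst hy)⟩
  · rintro s t ⟨δ, hδ, hs⟩ ⟨δ', hδ', ht⟩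
    exact ⟨min δ δ', lt_min hδ hδ', fun y hy => hy.elim
      (fun h => hQ y (min_le_left _ _) (hs y h)) (fun h => hQ y (min_le_right _ _) (ht y h))⟩
  · obtain ⟨δ, hδ, h⟩ := hloc x
    exact ⟨{y | Q δ y}, mem_nhdsWithin_of_mem_nhds h, δ, hδ, fun y hy => hy⟩

section Family

variable {A : Type*} [CStarAlgebra A] {X : Type*} [TopologicalSpace X]

lemma exists_continuousMap_cfc_eq_star_mul_mul {a : C(X, A)} (ha : ∀ x, IsSelfAdjoint (a x))
    {f g k : ℝ → ℝ} (hf : Continuous f) (hg : Continuous g)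
    (hk : ∀ x, EqOn k (fun t => g t * f t * g t) (spectrum ℝ (a x))) :
    ∃ s : C(X, A), ∀ x, cfc k (a x) = star (s x) * cfc f (a x) * s x :=
  ⟨⟨fun x => cfc g (a x), Continuous.cfc_of_mem_nhdsSet g univ_mem a.continuous⟩, fun x => by
    change cfc k (a x) = star (cfc g (a x)) * cfc f (a x) * cfc g (a x)
    rw [(cfc_predicate g (a x)).star_eq]
    exact cfc_eq_cfc_mul_cfc_mul_cfc hf.continuousOn hg.continuousOn (hk x)⟩

variable [PartialOrder A] [StarOrderedRing A]

lemma FiniteForProjections.eventually_spectrum_subset (hfin : FiniteForProjections A)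
    {a : X → A} (ha : Continuous a) (hsa : ∀ x, IsSelfAdjoint (a x)) {P : X → A}
    (hP : ∀ x, IsSupportProjection (P x) (a x)) {x₀ : X} (hMvN : ∀ y, MvNEquiv (P x₀) (P y))
    {δ : ℝ} (hδ : 0 < δ) (hgap : spectrum ℝ (a x₀) ⊆ {0} ∪ Ici δ) :
    ∀ᶠ y in 𝓝 x₀, spectrum ℝ (a y) ⊆ {0} ∪ Ici (δ / 2) := by
  set f := ramp (δ / 4) (δ / 2)
  have hf : Continuous f := continuous_ramp _ _
  have hf0 : ∀ t ≤ δ / 4, f t = 0 := fun t => ramp_of_le (by linarith)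
  have hf1 : ∀ t, δ / 2 ≤ t → f t = 1 := fun t => ramp_of_ge (by linarith)
  have hPx₀ : P x₀ = cfc f (a x₀) := (hP x₀).eq_cfc (hsa x₀) hf (hf0 0 (by positivity))
    fun t ht ht0 => hf1 t (by linarith [mem_Ici.1 ((hgap ht).resolve_left ht0)])
  have hU : ∀ᶠ y in 𝓝 x₀, spectrum ℝ (a y) ⊆ Iio (δ / 4) ∪ Ioi (δ / 2) := by
    refine (ha.tendsto x₀).eventually
      (((upperHemicontinuous_spectrum ℝ A).upperHemicontinuousAt (a x₀)).forall_isOpen _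
        (isOpen_Iio.union isOpen_Ioi) (hgap.trans ?_))
    rintro t (rfl | ht)
    · exact Or.inl (by rw [mem_Iio]; positivity)
    · exact Or.inr (by rw [mem_Ioi]; linarith [mem_Ici.1 ht])
  have hnear : ∀ᶠ y in 𝓝 x₀, ‖cfc f (a y) - P x₀‖ < 1 := by
    rw [hPx₀]
    simpa only [dist_eq_norm] using Metric.tendsto_nhds.1
      ((Continuous.cfc_of_mem_nhdsSet f univ_mem ha).tendsto x₀) 1 one_pos
  filter_upwards [hU, hnear] with y hUy hy
  have hproj : IsStarProjection (cfc f (a y)) := isStarProjection_cfc hf.continuousOn fun t ht => by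
    rcases hUy ht with h | h
    · simp [hf0 t h.le]
    · simp [hf1 t h.le]
  have hPy := isProjectionElem_iff_isStarProjection.1 (hP y).1
  have hMvNy : MvNEquiv (cfc f (a y)) (P y) :=
    (mvnEquiv_of_norm_sub_lt_one hproj
      (isProjectionElem_iff_isStarProjection.1 (hP x₀).1) hy).trans hproj.isIdempotentElem
      hPy.isIdempotentElem (hMvN y)
  have heq : cfc f (a y) = P y := hfin _ _ (isProjectionElem_iff_isStarProjection.2 hproj)
    (hP y).1 ((hP y).cfc_le (hsa y) hf (hf0 0 (by positivity)) hproj) hMvNy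
  have hfix := (cfc_mul_eq_self_iff (hsa y) hf.continuousOn).1 (heq ▸ (hP y).2.1)
  intro t ht
  rcases eq_or_ne t 0 with rfl | ht0
  · exact Or.inl rfl
  rcases hUy ht with h | h
  · exact absurd (by simpa [hf0 t h.le] using hfix t ht) (Ne.symm ht0)
  · exact Or.inr (mem_Ici.2 h.le)

lemma FiniteForProjections.exists_pos_spectrum_subset [CompactSpace X]
    (hfin : FiniteForProjections A) (a : C(X, A)) (hsa : ∀ x, IsSelfAdjoint (a x))
    (hspec : ∀ x, ∃ δ > (0 : ℝ), spectrum ℝ (a x) ⊆ {0} ∪ Ici δ) {P : X → A}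
    (hP : ∀ x, IsSupportProjection (P x) (a x)) (hMvN : ∀ x y, MvNEquiv (P x) (P y)) :
    ∃ δ > 0, ∀ x, spectrum ℝ (a x) ⊆ {0} ∪ Ici δ :=
  CompactSpace.exists_pos_forall_of_eventually
    (fun _ _ _ h hs => hs.trans (union_subset_union_right _ (Ici_subset_Ici.2 h))) fun x => by
      obtain ⟨δ, hδ, hx⟩ := hspec x
      exact ⟨δ / 2, by positivity,
        hfin.eventually_spectrum_subset a.continuous hsa hP (hMvN x) hδ hx⟩

end Family

theorem stmt_4_general {X : Type*} [TopologicalSpace X] [CompactSpace X]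
    {A : Type*} [CStarAlgebra A] [PartialOrder A] [StarOrderedRing A]
    (hfin : FiniteForProjections A)
    (a : C(X, A)) (ha : ∀ x, 0 ≤ a x)
    (hspec : ∀ x, ∃ δ > (0 : ℝ), spectrum ℝ (a x) ⊆ {0} ∪ Set.Ici δ)
    (P : X → A) (hP : ∀ x, IsSupportProjection (P x) (a x))
    (hMvN : ∀ x y, MvNEquiv (P x) (P y)) :
    Continuous P ∧
      (∀ δ > (0 : ℝ), ∃ s : C(X, A), ∀ x, ‖a x - star (s x) * P x * s x‖ < δ) ∧
      (∀ δ > (0 : ℝ), ∃ s : C(X, A), ∀ x, ‖P x - star (s x) * a x * s x‖ < δ) := by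
  have hsa : ∀ x, IsSelfAdjoint (a x) := fun x => (ha x).isSelfAdjoint
  obtain ⟨δ, hδ, hgap⟩ := hfin.exists_pos_spectrum_subset a hsa hspec hP hMvN
  have hF : Continuous (ramp 0 δ) := continuous_ramp 0 δ
  have hPF : ∀ x, P x = cfc (ramp 0 δ) (a x) := fun x =>
    (hP x).eq_cfc (hsa x) hF (ramp_of_le hδ le_rfl) fun t ht ht0 =>
      ramp_of_ge hδ ((hgap x ht).resolve_left ht0)
  obtain ⟨s, hs⟩ := exists_continuousMap_cfc_eq_star_mul_mul hsa hF Real.continuous_sqrt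
    (k := fun t => t) fun x _ ht => self_eq_sqrt_mul_ramp_mul_sqrt hδ (hgap x ht)
  obtain ⟨s', hs'⟩ := exists_continuousMap_cfc_eq_star_mul_mul hsa (k := ramp 0 δ)
    (f := fun t => t) continuous_id' (g := fun t => (√(max t δ))⁻¹)
    ((Real.continuous_sqrt.comp (continuous_id.max continuous_const)).inv₀ fun t =>
      (Real.sqrt_pos.2 (lt_max_of_lt_right hδ)).ne')
    fun x _ ht => ramp_eq_inv_sqrt_mul_mul_inv_sqrt hδ (hgap x ht)
  refine ⟨funext hPF ▸ Continuous.cfc_of_mem_nhdsSet _ univ_mem a.continuous,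
    fun ε hε => ⟨s, fun x => ?_⟩, fun ε hε => ⟨s', fun x => ?_⟩⟩
  · rwa [hPF x, ← hs x, cfc_id' ℝ (a x) (hsa x), sub_self, norm_zero]
  · rwa [hPF x, hs' x, cfc_id' ℝ (a x) (hsa x), sub_self, norm_zero]

/-- If `a` is a positive element of `C(X, A)` (`X` compact Hausdorff, `A` separable unital
and finite for projections) whose values have spectrum in `{0} ∪ [δ, ∞)` and whose support
projections `P x = χ(a(x))` are pairwise Murray–von Neumann equivalent, then `P` is
continuous and `a` is Cuntz equivalent to `P` in `C(X, A)`. -/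
theorem stmt_4 {X : Type*} [TopologicalSpace X] [CompactSpace X] [T2Space X]
    {A : Type*} [CStarAlgebra A] [PartialOrder A] [StarOrderedRing A]
    [TopologicalSpace.SeparableSpace A]
    (hfin : FiniteForProjections A)
    (a : C(X, A)) (ha : ∀ x, 0 ≤ a x)
    (hspec : ∀ x, ∃ δ > (0 : ℝ), spectrum ℝ (a x) ⊆ {0} ∪ Set.Ici δ)
    (P : X → A) (hP : ∀ x, IsSupportProjection (P x) (a x))
    (hMvN : ∀ x y, MvNEquiv (P x) (P y)) :
    Continuous P ∧
      (∀ δ > (0 : ℝ), ∃ s : C(X, A), ∀ x, ‖a x - star (s x) * P x * s x‖ < δ) ∧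
      (∀ δ > (0 : ℝ), ∃ s : C(X, A), ∀ x, ‖P x - star (s x) * a x * s x‖ < δ) :=
  stmt_4_general hfin a ha hspec P hP hMvN
end

section
/- Let E be a Hausdorff locally convex real topological vector space and K ⊆ E a nonempty compact convex subset. Assume: (a) every lower semicontinuous affine function f : K → ℝ is the pointwise supremum of the continuous affine functions g : K → ℝ with g ≤ f; (b) whenever f : K → ℝ is lower semicontinuous affine and g₁, …, g_k : K → ℝ are finitely many continuous affine functions with g_i ≤ f for all i, there exists a continuous affine h : K → ℝ with g_i ≤ h ≤ f for all i; and (c) the continuous affine functions K → ℝ with pointwise order satisfy the Riesz interpolation property. (Conditions (a)–(c) hold whenever K is a Choquet simplex, by Edwards' separation theorem.) Then the set of lower semicontinuous affine functions K → ℝ, partially ordered pointwise, has the Riesz interpolation property: whenever lower semicontinuous affine functions satisfy a₁, a₂ ≤ c₁, c₂, there exists a lower semicontinuous affine function b with a₁, a₂ ≤ b ≤ c₁, c₂. -/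
/-!
Let `D` be the set of continuous affine functions lying below both `c₁` and `c₂`, and take
`b = sup D`. Condition (b) makes the continuous affine minorants of each `cⱼ` an upward directed
family, and Riesz interpolation (c) among continuous affine functions then makes `D` upward
directed. A directed supremum of affine functions is affine, a supremum of continuous functions
is lower semicontinuous, and `b ≤ c₁, c₂` by construction. Finally, every continuous affine
minorant of `aᵢ` lies in `D`, so `aᵢ ≤ b` by (a).
-/

/-- A real-valued function on a convex set `K` is affine if it respects convex
combinations. -/
def AffineOn {E : Type*} [AddCommGroup E] [Module ℝ E] {K : Set E} (hK : Convex ℝ K)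
    (f : K → ℝ) : Prop :=
  ∀ (x y : K) (t : ℝ) (ht : 0 ≤ t) (ht' : t ≤ 1),
    f ⟨t • (x : E) + (1 - t) • (y : E),
        hK x.2 y.2 ht (by linarith) (by ring)⟩ = t * f x + (1 - t) * f y

open Set

def RieszInterpolationOn {α : Type*} [Preorder α] (S : Set α) : Prop :=
  ∀ a₁ a₂ c₁ c₂, a₁ ∈ S → a₂ ∈ S → c₁ ∈ S → c₂ ∈ S →
    a₁ ≤ c₁ → a₁ ≤ c₂ → a₂ ≤ c₁ → a₂ ≤ c₂ → ∃ b ∈ S, a₁ ≤ b ∧ a₂ ≤ b ∧ b ≤ c₁ ∧ b ≤ c₂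

theorem RieszInterpolationOn.directedOn_inter_Iic_inter_Iic {α : Type*} [Preorder α]
    {S : Set α} (hS : RieszInterpolationOn S) {c₁ c₂ : α}
    (h₁ : DirectedOn (· ≤ ·) (S ∩ Iic c₁)) (h₂ : DirectedOn (· ≤ ·) (S ∩ Iic c₂)) :
    DirectedOn (· ≤ ·) (S ∩ Iic c₁ ∩ Iic c₂) := by
  rintro g₁ ⟨⟨hg₁, hg₁c₁⟩, hg₁c₂⟩ g₂ ⟨⟨hg₂, hg₂c₁⟩, hg₂c₂⟩
  obtain ⟨p₁, ⟨hp₁, hp₁c₁⟩, hg₁p₁, hg₂p₁⟩ := h₁ g₁ ⟨hg₁, hg₁c₁⟩ g₂ ⟨hg₂, hg₂c₁⟩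
  obtain ⟨p₂, ⟨hp₂, hp₂c₂⟩, hg₁p₂, hg₂p₂⟩ := h₂ g₁ ⟨hg₁, hg₁c₂⟩ g₂ ⟨hg₂, hg₂c₂⟩
  obtain ⟨q, hq, hg₁q, hg₂q, hqp₁, hqp₂⟩ :=
    hS g₁ g₂ p₁ p₂ hg₁ hg₂ hp₁ hp₂ hg₁p₁ hg₁p₂ hg₂p₁ hg₂p₂
  exact ⟨q, ⟨⟨hq, hqp₁.trans hp₁c₁⟩, hqp₂.trans hp₂c₂⟩, hg₁q, hg₂q⟩

theorem lowerSemicontinuous_csSup {α β : Type*} [TopologicalSpace α]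
    [ConditionallyCompleteLinearOrder β] [TopologicalSpace β] [OrderTopology β]
    {D : Set (α → β)} (hD : BddAbove D) (h : ∀ g ∈ D, LowerSemicontinuous g) :
    LowerSemicontinuous (sSup D) := by
  obtain ⟨u, hu⟩ := hD
  exact lowerSemicontinuous_ciSup (f := fun g : D => (g : α → β))
    (fun x => ⟨u x, by rintro _ ⟨g, rfl⟩; exact hu g.2 x⟩) fun g => h g g.2

section Affine

variable {E : Type*} [AddCommGroup E] [Module ℝ E] {K : Set E} {hK : Convex ℝ K}

theorem AffineOn.csSup {D : Set (K → ℝ)} (hne : D.Nonempty) (hbdd : BddAbove D)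
    (hdir : DirectedOn (· ≤ ·) D) (haff : ∀ g ∈ D, AffineOn hK g) :
    AffineOn hK (sSup D) := by
  intro x y t ht ht'
  have : Nonempty D := hne.to_subtype
  set z : K := ⟨t • (x : E) + (1 - t) • (y : E), hK x.2 y.2 ht (by linarith) (by ring)⟩
  have hle : ∀ g ∈ D, g ≤ sSup D := fun g hg => le_csSup hbdd hg
  apply le_antisymm
  · refine ciSup_le fun g => ?_
    rw [haff g g.2 x y t ht ht']
    have := sub_nonneg.2 ht'
    gcongr
    exacts [hle g g.2 x, hle g g.2 y]
  · have key : ∀ g₁ g₂ : D, t * g₁.1 x + (1 - t) * g₂.1 y ≤ sSup D z := fun g₁ g₂ => by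
      obtain ⟨g, hg, hg₁, hg₂⟩ := hdir g₁ g₁.2 g₂ g₂.2
      calc t * g₁.1 x + (1 - t) * g₂.1 y ≤ t * g x + (1 - t) * g y := by
            have := sub_nonneg.2 ht'
            gcongr
            exacts [hg₁ x, hg₂ y]
        _ = g z := (haff g hg x y t ht ht').symm
        _ ≤ sSup D z := hle g hg z
    have hx : ∀ g₂ : D, t * sSup D x ≤ sSup D z - (1 - t) * g₂.1 y := fun g₂ => by
      rw [sSup_apply (a := x), Real.mul_iSup_of_nonneg ht]
      exact ciSup_le fun g₁ => le_sub_iff_add_le.2 (key g₁ g₂)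
    have hy : (1 - t) * sSup D y ≤ sSup D z - t * sSup D x := by
      rw [sSup_apply (a := y), Real.mul_iSup_of_nonneg (sub_nonneg.2 ht')]
      exact ciSup_le fun g₂ => le_sub_comm.1 (hx g₂)
    linarith

end Affine

theorem stmt_9_general {E : Type*} [AddCommGroup E] [Module ℝ E] [TopologicalSpace E]
    (K : Set E) (hconv : Convex ℝ K)
    -- (a) every lower semicontinuous affine function is the pointwise supremum of the
    -- continuous affine functions below it
    (hsup : ∀ f : K → ℝ, LowerSemicontinuous f → AffineOn hconv f → ∀ x : K,
      IsLUB {r : ℝ | ∃ g : K → ℝ, Continuous g ∧ AffineOn hconv g ∧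
        (∀ z, g z ≤ f z) ∧ r = g x} (f x))
    -- (b) finitely many continuous affine functions below a lower semicontinuous affine
    -- function admit a continuous affine function interpolating between them
    (hdom : ∀ f : K → ℝ, LowerSemicontinuous f → AffineOn hconv f →
      ∀ (k : ℕ) (g : Fin k → K → ℝ),
        (∀ i, Continuous (g i) ∧ AffineOn hconv (g i) ∧ ∀ z, g i z ≤ f z) →
        ∃ h : K → ℝ, Continuous h ∧ AffineOn hconv h ∧
          (∀ i z, g i z ≤ h z) ∧ ∀ z, h z ≤ f z)
    -- (c) the continuous affine functions have Riesz interpolation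
    (hriesz : ∀ a₁ a₂ c₁ c₂ : K → ℝ,
      Continuous a₁ → AffineOn hconv a₁ → Continuous a₂ → AffineOn hconv a₂ →
      Continuous c₁ → AffineOn hconv c₁ → Continuous c₂ → AffineOn hconv c₂ →
      (∀ z, a₁ z ≤ c₁ z) → (∀ z, a₁ z ≤ c₂ z) → (∀ z, a₂ z ≤ c₁ z) → (∀ z, a₂ z ≤ c₂ z) →
      ∃ b : K → ℝ, Continuous b ∧ AffineOn hconv b ∧
        (∀ z, a₁ z ≤ b z) ∧ (∀ z, a₂ z ≤ b z) ∧ (∀ z, b z ≤ c₁ z) ∧ (∀ z, b z ≤ c₂ z))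
    -- Riesz interpolation for lower semicontinuous affine functions
    (a₁ a₂ c₁ c₂ : K → ℝ)
    (ha₁ : LowerSemicontinuous a₁) (ha₁' : AffineOn hconv a₁)
    (ha₂ : LowerSemicontinuous a₂) (ha₂' : AffineOn hconv a₂)
    (hc₁ : LowerSemicontinuous c₁) (hc₁' : AffineOn hconv c₁)
    (hc₂ : LowerSemicontinuous c₂) (hc₂' : AffineOn hconv c₂)
    (h11 : ∀ z, a₁ z ≤ c₁ z) (h12 : ∀ z, a₁ z ≤ c₂ z)
    (h21 : ∀ z, a₂ z ≤ c₁ z) (h22 : ∀ z, a₂ z ≤ c₂ z) :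
    ∃ b : K → ℝ, LowerSemicontinuous b ∧ AffineOn hconv b ∧
      (∀ z, a₁ z ≤ b z) ∧ (∀ z, a₂ z ≤ b z) ∧ (∀ z, b z ≤ c₁ z) ∧ (∀ z, b z ≤ c₂ z) := by
  set S := {g : K → ℝ | Continuous g ∧ AffineOn hconv g}
  have hS : RieszInterpolationOn S := fun p₁ p₂ q₁ q₂ hp₁ hp₂ hq₁ hq₂ h₁₁ h₁₂ h₂₁ h₂₂ =>
    let ⟨b, hbc, hba, hb⟩ :=
      hriesz p₁ p₂ q₁ q₂ hp₁.1 hp₁.2 hp₂.1 hp₂.2 hq₁.1 hq₁.2 hq₂.1 hq₂.2 h₁₁ h₁₂ h₂₁ h₂₂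
    ⟨b, ⟨hbc, hba⟩, hb⟩
  have hdir : ∀ f, LowerSemicontinuous f → AffineOn hconv f → DirectedOn (· ≤ ·) (S ∩ Iic f) := by
    rintro f hf hf' g₁ ⟨hg₁, hg₁f⟩ g₂ ⟨hg₂, hg₂f⟩
    obtain ⟨h, hhc, hha, hgh, hhf⟩ := hdom f hf hf' 2 ![g₁, g₂]
      (Fin.forall_fin_two.2 ⟨⟨hg₁.1, hg₁.2, hg₁f⟩, ⟨hg₂.1, hg₂.2, hg₂f⟩⟩)
    exact ⟨h, ⟨⟨hhc, hha⟩, hhf⟩, hgh 0, hgh 1⟩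
  set D := S ∩ Iic c₁ ∩ Iic c₂
  have hDbdd : BddAbove D := ⟨c₁, fun g hg => hg.1.2⟩
  have hle : ∀ a, LowerSemicontinuous a → AffineOn hconv a → a ≤ c₁ → a ≤ c₂ → a ≤ sSup D :=
    fun a ha ha' hac₁ hac₂ x => (hsup a ha ha' x).2 <| by
      rintro _ ⟨g, hgc, hga, hgle, rfl⟩
      exact le_csSup hDbdd ⟨⟨⟨hgc, hga⟩, le_trans hgle hac₁⟩, le_trans hgle hac₂⟩ x
  -- the empty family in (b) yields a continuous affine minorant of `a₁`
  obtain ⟨g₀, hg₀c, hg₀a, -, hg₀⟩ := hdom a₁ ha₁ ha₁' 0 Fin.elim0 (fun i => i.elim0)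
  have hD : D.Nonempty :=
    ⟨g₀, ⟨⟨hg₀c, hg₀a⟩, (le_trans hg₀ h11 : g₀ ≤ c₁)⟩, (le_trans hg₀ h12 : g₀ ≤ c₂)⟩
  have hDdir : DirectedOn (· ≤ ·) D :=
    hS.directedOn_inter_Iic_inter_Iic (hdir c₁ hc₁ hc₁') (hdir c₂ hc₂ hc₂')
  exact ⟨sSup D, lowerSemicontinuous_csSup hDbdd fun g hg => hg.1.1.1.lowerSemicontinuous,
    AffineOn.csSup hD hDbdd hDdir fun g hg => hg.1.1.2,
    hle a₁ ha₁ ha₁' h11 h12, hle a₂ ha₂ ha₂' h21 h22,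
    csSup_le hD fun g hg => hg.1.2, csSup_le hD fun g hg => hg.2⟩

/-- If `K` is a nonempty compact convex subset of a Hausdorff locally convex real
topological vector space satisfying conditions (a), (b), (c) (which hold for Choquet
simplices by Edwards' separation theorem), then the lower semicontinuous affine
functions `K → ℝ` with the pointwise order have the Riesz interpolation property. -/
theorem stmt_9 {E : Type*} [AddCommGroup E] [Module ℝ E] [TopologicalSpace E]
    [IsTopologicalAddGroup E] [ContinuousSMul ℝ E] [LocallyConvexSpace ℝ E] [T2Space E]
    (K : Set E) (hne : K.Nonempty) (hcpt : IsCompact K) (hconv : Convex ℝ K)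
    -- (a) every lower semicontinuous affine function is the pointwise supremum of the
    -- continuous affine functions below it
    (hsup : ∀ f : K → ℝ, LowerSemicontinuous f → AffineOn hconv f → ∀ x : K,
      IsLUB {r : ℝ | ∃ g : K → ℝ, Continuous g ∧ AffineOn hconv g ∧
        (∀ z, g z ≤ f z) ∧ r = g x} (f x))
    -- (b) finitely many continuous affine functions below a lower semicontinuous affine
    -- function admit a continuous affine function interpolating between them
    (hdom : ∀ f : K → ℝ, LowerSemicontinuous f → AffineOn hconv f →
      ∀ (k : ℕ) (g : Fin k → K → ℝ),
        (∀ i, Continuous (g i) ∧ AffineOn hconv (g i) ∧ ∀ z, g i z ≤ f z) →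
        ∃ h : K → ℝ, Continuous h ∧ AffineOn hconv h ∧
          (∀ i z, g i z ≤ h z) ∧ ∀ z, h z ≤ f z)
    -- (c) the continuous affine functions have Riesz interpolation
    (hriesz : ∀ a₁ a₂ c₁ c₂ : K → ℝ,
      Continuous a₁ → AffineOn hconv a₁ → Continuous a₂ → AffineOn hconv a₂ →
      Continuous c₁ → AffineOn hconv c₁ → Continuous c₂ → AffineOn hconv c₂ →
      (∀ z, a₁ z ≤ c₁ z) → (∀ z, a₁ z ≤ c₂ z) → (∀ z, a₂ z ≤ c₁ z) → (∀ z, a₂ z ≤ c₂ z) →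
      ∃ b : K → ℝ, Continuous b ∧ AffineOn hconv b ∧
        (∀ z, a₁ z ≤ b z) ∧ (∀ z, a₂ z ≤ b z) ∧ (∀ z, b z ≤ c₁ z) ∧ (∀ z, b z ≤ c₂ z))
    -- Riesz interpolation for lower semicontinuous affine functions
    (a₁ a₂ c₁ c₂ : K → ℝ)
    (ha₁ : LowerSemicontinuous a₁) (ha₁' : AffineOn hconv a₁)
    (ha₂ : LowerSemicontinuous a₂) (ha₂' : AffineOn hconv a₂)
    (hc₁ : LowerSemicontinuous c₁) (hc₁' : AffineOn hconv c₁)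
    (hc₂ : LowerSemicontinuous c₂) (hc₂' : AffineOn hconv c₂)
    (h11 : ∀ z, a₁ z ≤ c₁ z) (h12 : ∀ z, a₁ z ≤ c₂ z)
    (h21 : ∀ z, a₂ z ≤ c₁ z) (h22 : ∀ z, a₂ z ≤ c₂ z) :
    ∃ b : K → ℝ, LowerSemicontinuous b ∧ AffineOn hconv b ∧
      (∀ z, a₁ z ≤ b z) ∧ (∀ z, a₂ z ≤ b z) ∧ (∀ z, b z ≤ c₁ z) ∧ (∀ z, b z ≤ c₂ z) :=
  stmt_9_general K hconv hsup hdom hriesz a₁ a₂ c₁ c₂ ha₁ ha₁' ha₂ ha₂' hc₁ hc₁' hc₂ hc₂' h11 h12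
    h21 h22
end
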